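/- arXiv:1602.08238 — 2 statements merged into one kernel-verified Lean document; each statement's English description precedes it below -/
import Mathlib

section
/- Let X₁ = (2A−1)·2^{k} ± 1 with A, k natural numbers, 2 ≤ k ≤ w−1, and let p = (2B−1)·2^r ± 1 with B a natural number and 2 ≤ r ≤ w−1. Then the orbit of X₁ under iteration of the map x ↦ T_p(x) modulo 2^w has period exactly max(2^{w−k−r−1}, 1). -/
open Polynomial Polynomial.Chebyshev

section Identities

variable (R : Type*) [CommRing R]

/-- `2(X²-1) U_n = T_{n+2} - T_n`. -/
theorem aux_two_mul_U (n : ℤ) :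
    2 * ((X : R[X]) ^ 2 - 1) * U R n = T R (n + 2) - T R n := by
  have h₁ := one_sub_X_sq_mul_U_eq_pol_in_T R n
  have h₂ := T_add_two R n
  linear_combination (norm := ring_nf) -2 * h₁ + h₂

/-- product formula for two `U`'s. -/
theorem aux_mul_U_U (m k : ℤ) :
    2 * ((X : R[X]) ^ 2 - 1) * U R m * U R k = T R (m + k + 2) - T R (m - k) := by
  induction k using Polynomial.Chebyshev.induct with
  | zero =>
    have h := aux_two_mul_U R m
    have h' := T_neg R m
    simp only [U_zero, mul_one, add_zero, sub_zero]
    linear_combination (norm := ring_nf) h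
  | one =>
    have h := aux_two_mul_U R m
    have h₁ := T_add_two R (m + 1)
    have h₄ := T_add_two R (m - 1)
    simp only [U_one]
    linear_combination (norm := ring_nf) 2 * (X : R[X]) * h - h₁ + h₄
  | add_two k ih1 ih2 =>
    have h₁ := T_add_two R (m + k + 2)
    have h₂ := T_sub_two R (m - k)
    have h₃ := U_add_two R k
    linear_combination (norm := ring_nf)
      2 * ((X : R[X]) ^ 2 - 1) * U R m * h₃ + h₂ - h₁ - ih2 + 2 * (X : R[X]) * ih1
  | neg_add_one k ih1 ih2 =>
    have ha := T_add_two R (m - k + 1)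
    have hb := T_add_two R (m + k - 1)
    have h₃ := U_add_two R (-k - 1)
    linear_combination (norm := ring_nf)
      2 * ((X : R[X]) ^ 2 - 1) * U R m * h₃ + hb - ha - ih2 + 2 * (X : R[X]) * ih1

/-- product formula for `T` times `U`. -/
theorem aux_mul_T_U (m k : ℤ) :
    2 * T R m * U R k = U R (k + m) + U R (k - m) := by
  induction m using Polynomial.Chebyshev.induct with
  | zero => simp [two_mul]
  | one =>
    simp only [T_one]
    linear_combination (norm := ring_nf) -(U_add_two R (k - 1))
  | add_two m ih1 ih2 =>
    have h₁ := U_add_two R (k + m)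
    have h₂ := U_sub_two R (k - m)
    have h₃ := T_add_two R m
    linear_combination (norm := ring_nf)
      2 * U R k * h₃ - h₂ - h₁ - ih2 + 2 * (X : R[X]) * ih1
  | neg_add_one m ih1 ih2 =>
    have h₁ := U_add_two R (k + (-m - 1))
    have h₂ := U_sub_two R (k - (-m - 1))
    have h₃ := T_add_two R (-m - 1)
    linear_combination (norm := ring_nf)
      2 * U R k * h₃ - h₂ - h₁ - ih2 + 2 * (X : R[X]) * ih1

end Identities

section Parity

theorem aux_evalT_cast (S : Type*) [CommRing S] (n : ℤ) (x : ℤ) :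
    (((T ℤ n).eval x : ℤ) : S) = (T S n).eval ((x : ℤ) : S) := by
  have h := Polynomial.eval₂_at_apply (p := T ℤ n) (Int.castRingHom S) x
  rw [← Polynomial.eval_map, map_T] at h
  simpa using h.symm

theorem aux_evalU_cast (S : Type*) [CommRing S] (n : ℤ) (x : ℤ) :
    (((U ℤ n).eval x : ℤ) : S) = (U S n).eval ((x : ℤ) : S) := by
  have h := Polynomial.eval₂_at_apply (p := U ℤ n) (Int.castRingHom S) x
  rw [← Polynomial.eval_map, map_U] at h
  simpa using h.symm

theorem aux_T_eval_one (n : ℤ) : (T (ZMod 2) n).eval 1 = 1 := by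
  have h2 : (2 : ZMod 2) = 0 := rfl
  induction n using Polynomial.Chebyshev.induct with
  | zero => simp
  | one => simp
  | add_two n ih1 ih2 =>
    rw [T_add_two]
    simp only [eval_sub, eval_mul, eval_X, eval_ofNat, ih1, ih2, h2]
    decide
  | neg_add_one n ih1 ih2 =>
    have h := T_sub_one (ZMod 2) (-n)
    have : (-(n:ℤ) - 1) = -n - 1 := rfl
    rw [show (-(n:ℤ) - 1) = (-n) - 1 from rfl, h]
    simp only [eval_sub, eval_mul, eval_X, eval_ofNat, ih1, ih2, h2]
    decide

theorem aux_U_eval_one (n : ℤ) : (U (ZMod 2) n).eval 1 = if 2 ∣ n then 1 else 0 := by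
  have h2 : (2 : ZMod 2) = 0 := rfl
  induction n using Polynomial.Chebyshev.induct with
  | zero => simp
  | one =>
    rw [U_one, if_neg (by decide)]
    simp [h2]
  | add_two n ih1 ih2 =>
    rw [U_add_two]
    simp only [eval_sub, eval_mul, eval_X, eval_ofNat, ih1, ih2, h2, zero_mul, mul_zero,
      zero_sub]
    by_cases hd : 2 ∣ (n : ℤ)
    · rw [if_pos hd, if_pos (by omega)]; decide
    · rw [if_neg hd, if_neg (by omega)]; decide
  | neg_add_one n ih1 ih2 =>
    have h := U_sub_one (ZMod 2) (-n)
    rw [show (-(n:ℤ) - 1) = (-n) - 1 from rfl, h]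
    simp only [eval_sub, eval_mul, eval_X, eval_ofNat, ih1, ih2, h2, zero_mul, mul_zero,
      zero_sub]
    by_cases hd : 2 ∣ (-(n : ℤ) + 1)
    · rw [if_pos hd, if_pos (by omega)]; decide
    · rw [if_neg hd, if_neg (by omega)]; decide

theorem aux_odd_cast {x : ℤ} (hx : Odd x) : ((x : ℤ) : ZMod 2) = 1 := by
  obtain ⟨j, rfl⟩ := hx
  push_cast
  have h2 : (2 : ZMod 2) = 0 := rfl
  rw [h2]; ring

theorem aux_odd_of_cast_eq_one {m : ℤ} (h : ((m : ℤ) : ZMod 2) = 1) : Odd m := by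
  by_contra hodd
  obtain ⟨j, rfl⟩ := Int.not_odd_iff_even.1 hodd
  push_cast at h
  have h2 : (2 : ZMod 2) = 0 := rfl
  rw [show ((j : ZMod 2) + j) = 2 * j from by ring, h2, zero_mul] at h
  exact absurd h (by decide)

theorem aux_T_eval_odd {x : ℤ} (hx : Odd x) (n : ℤ) : Odd ((T ℤ n).eval x) := by
  apply aux_odd_of_cast_eq_one
  rw [aux_evalT_cast, aux_odd_cast hx, aux_T_eval_one]

theorem aux_U_eval_odd {x : ℤ} (hx : Odd x) {n : ℤ} (hn : 2 ∣ n) :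
    Odd ((U ℤ n).eval x) := by
  apply aux_odd_of_cast_eq_one
  rw [aux_evalU_cast, aux_odd_cast hx, aux_U_eval_one, if_pos hn]

/-- exact 2-adic valuation of `U` evaluated at an odd integer:
`v₂(U_{n-1}(x)) = v₂(n)`. -/
theorem aux_U_val {x : ℤ} (hx : Odd x) :
    ∀ (t : ℕ) (c : ℤ), Odd c → ∃ o : ℤ, Odd o ∧ (U ℤ (2 ^ t * c - 1)).eval x = 2 ^ t * o := by
  intro t
  induction t with
  | zero =>
    intro c hc
    refine ⟨(U ℤ (2 ^ 0 * c - 1)).eval x, ?_, by ring⟩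
    apply aux_U_eval_odd hx
    obtain ⟨j, rfl⟩ := hc
    exact ⟨j, by ring⟩
  | succ t ih =>
    intro c hc
    obtain ⟨o, ho, hval⟩ := ih c hc
    set m : ℤ := 2 ^ t * c - 1 with hm
    have hid : (2 : ℤ[X]) * T ℤ (m + 1) * U ℤ m = U ℤ (2 * 2 ^ t * c - 1) := by
      have h := aux_mul_T_U ℤ (m + 1) m
      have h1 : m + (m + 1) = 2 * 2 ^ t * c - 1 := by rw [hm]; ring
      have h2 : m - (m + 1) = -1 := by ring
      rw [h1, h2, U_neg_one, add_zero] at h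
      exact h
    have := congrArg (Polynomial.eval x) hid
    simp only [eval_mul, eval_ofNat] at this
    refine ⟨(T ℤ (m + 1)).eval x * o, (aux_T_eval_odd hx (m + 1)).mul ho, ?_⟩
    have hidx : (2 : ℤ) ^ (t + 1) * c - 1 = 2 * 2 ^ t * c - 1 := by ring
    rw [hidx, ← this, hval]
    ring

end Parity

/-- Key valuation: if `x` is odd with `x² - 1 = 2^{kk+1} m` (`m` odd), and
`N = η(1 + c·2^e)` with `c` odd, `e ≥ 2`, `η = ±1`, then
`T_N(x) - x = 2^{kk+e+1}·odd`. -/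
theorem aux_key {x : ℤ} (hx : Odd x) {kk : ℕ} {m : ℤ} (hm : Odd m)
    (hx2 : x ^ 2 - 1 = 2 ^ (kk + 1) * m) {e : ℕ} (he : 2 ≤ e) {c : ℤ} (hc : Odd c)
    {η : ℤ} (hη : η = 1 ∨ η = -1) :
    ∃ o : ℤ, Odd o ∧ (T ℤ (η * (1 + c * 2 ^ e))).eval x - x = 2 ^ (kk + e + 1) * o := by
  have hTη : T ℤ (η * (1 + c * 2 ^ e)) = T ℤ (1 + c * 2 ^ e) := by
    rcases hη with h | h
    · rw [h, one_mul]
    · rw [h, show (-1 : ℤ) * (1 + c * 2 ^ e) = -(1 + c * 2 ^ e) from by ring, T_neg]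
  set a : ℤ := c * 2 ^ (e - 1) with ha
  have h2e : (2 : ℤ) ^ e = 2 * 2 ^ (e - 1) := by
    rw [← pow_succ']; congr 1; omega
  have h2a : 1 + c * 2 ^ e = a + (a - 1) + 2 := by rw [ha, h2e]; ring
  have hprod := aux_mul_U_U ℤ a (a - 1)
  have hsub : a - (a - 1) = 1 := by ring
  rw [hsub] at hprod
  have heval := congrArg (Polynomial.eval x) hprod
  simp only [eval_mul, eval_sub, eval_pow, eval_ofNat, eval_one, eval_X, T_one] at heval
  obtain ⟨o₁, ho₁, hval₁⟩ := aux_U_val hx (e - 1) c hc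
  rw [show (2:ℤ) ^ (e-1) * c - 1 = a - 1 from by rw [ha]; ring] at hval₁
  have haeven : 2 ∣ a := by
    rw [ha]; exact Dvd.dvd.mul_left (dvd_pow_self 2 (by omega)) c
  have hUa := aux_U_eval_odd hx haeven
  refine ⟨m * ((U ℤ a).eval x) * o₁, (hm.mul hUa).mul ho₁, ?_⟩
  rw [hTη, h2a, ← heval, hx2, hval₁]
  have hpw : (2:ℤ) * 2 ^ (kk+1) * 2 ^ (e-1) = 2 ^ (kk + e + 1) := by
    rw [show kk + e + 1 = 1 + (kk+1) + (e-1) from by omega]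
    simp only [pow_add, pow_one]
    try ring
  linear_combination ((U ℤ a).eval x * m * o₁) * hpw

theorem aux_even_two_pow {r : ℕ} (hr : 1 ≤ r) : Even ((2:ℤ) ^ r) :=
  ⟨2 ^ (r - 1), by rw [← two_mul, ← pow_succ']; congr 1; omega⟩

theorem aux_odd_natCast {c : ℕ} (hc : Odd c) : ((c : ℕ) : ZMod 2) = 1 := by
  obtain ⟨j, rfl⟩ := hc
  push_cast
  have h2 : (2 : ZMod 2) = 0 := rfl
  rw [h2]; ring

/-- LTE: `p = b·2^r + δ` with `b` odd, `δ = ±1` gives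
`p^{2^t c} = δ^{2^t c} + odd·2^{r+t}` for odd `c`. -/
theorem aux_ppow {p δ : ℤ} (hδ : δ = 1 ∨ δ = -1) {r : ℕ} (hr : 2 ≤ r) {b : ℤ} (hb : Odd b)
    (hp : p = b * 2 ^ r + δ) :
    ∀ (t : ℕ) (c : ℕ), Odd c →
      ∃ cc : ℤ, Odd cc ∧ p ^ (2 ^ t * c) = δ ^ (2 ^ t * c) + cc * 2 ^ (r + t) := by
  have hδodd : Odd δ := by rcases hδ with h | h <;> rw [h] <;> decide
  have hpodd : Odd p := by
    rw [hp]
    exact (Even.mul_left (aux_even_two_pow (by omega)) b).add_odd hδodd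
  intro t
  induction t with
  | zero =>
    intro c hc
    have hgeom := geom_sum₂_mul p δ c
    have hpδ : p - δ = b * 2 ^ r := by rw [hp]; ring
    set S : ℤ := ∑ i ∈ Finset.range c, p ^ i * δ ^ (c - 1 - i) with hS
    have hSodd : Odd S := by
      apply aux_odd_of_cast_eq_one
      rw [hS]
      push_cast
      rw [aux_odd_cast hpodd, aux_odd_cast hδodd]
      simp only [one_pow, one_mul, Finset.sum_const, Finset.card_range, nsmul_eq_mul, mul_one]
      exact aux_odd_natCast hc
    refine ⟨b * S, hb.mul hSodd, ?_⟩
    have : S * (b * 2 ^ r) = p ^ c - δ ^ c := by rw [← hpδ]; exact hgeom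
    simp only [pow_zero, one_mul, Nat.add_zero]
    linear_combination -this
  | succ t ih =>
    intro c hc
    obtain ⟨cc, hcc, hIH⟩ := ih c hc
    have hδn : δ ^ (2 ^ t * c) = 1 ∨ δ ^ (2 ^ t * c) = -1 := by
      rcases hδ with h | h
      · left; rw [h, one_pow]
      · rw [h]
        rcases Nat.even_or_odd (2 ^ t * c) with he | ho
        · left; exact he.neg_one_pow
        · right; exact ho.neg_one_pow
    have hδncc : Odd (δ ^ (2 ^ t * c) * cc) := by
      rcases hδn with h | h <;> rw [h] <;> simpa using hcc
    refine ⟨δ ^ (2 ^ t * c) * cc + cc ^ 2 * 2 ^ (r + t - 1),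
      hδncc.add_even (Even.mul_left (aux_even_two_pow (by omega)) _), ?_⟩
    have hexp : 2 ^ (t+1) * c = (2 ^ t * c) * 2 := by ring
    have hp2 : p ^ (2 ^ t * c * 2) = (p ^ (2 ^ t * c)) ^ 2 := pow_mul p _ 2
    have hd2 : δ ^ (2 ^ t * c * 2) = (δ ^ (2 ^ t * c)) ^ 2 := pow_mul δ _ 2
    rw [hexp, hp2, hd2, hIH]
    have hpw : (2:ℤ) * 2 ^ (r + t - 1) = 2 ^ (r + t) := by
      rw [← pow_succ']; congr 1; omega
    have hpw2 : (2:ℤ) ^ (r + (t + 1)) = 2 * 2 ^ (r + t) := by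
      rw [show r + (t + 1) = (r + t) + 1 from rfl, pow_succ']
    rw [hpw2]
    linear_combination (-(cc ^ 2) * 2 ^ (r + t)) * hpw

/-- Let `X₁ = (2A−1)·2^k ± 1` with `A ≥ 1`, `2 ≤ k ≤ w−1`, and let
`p = (2B−1)·2^r ± 1` with `B ≥ 1`, `2 ≤ r ≤ w−1`. Then the orbit of `X₁` under
`x ↦ T_p(x)` on `ℤ/2^wℤ` has period exactly `max (2^{w−k−r−1}) 1`. -/
theorem chebyshev_orbital_period_X1 (w A B k r : ℕ) (hA : 1 ≤ A) (hB : 1 ≤ B)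
    (hk : 2 ≤ k) (hkw : k ≤ w - 1) (hr : 2 ≤ r) (hrw : r ≤ w - 1) (hw : 1 ≤ w)
    (ε δ : ℤ) (hε : ε = 1 ∨ ε = -1) (hδ : δ = 1 ∨ δ = -1) :
    Function.minimalPeriod
        (fun x : ZMod (2 ^ w) =>
          (Polynomial.Chebyshev.T (ZMod (2 ^ w)) ((2 * (B : ℤ) - 1) * 2 ^ r + δ)).eval x)
        (((2 * (A : ℤ) - 1) * 2 ^ k + ε : ℤ) : ZMod (2 ^ w)) =
      max (2 ^ (w - k - r - 1)) 1 := by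
  have h2 : (2 : ZMod 2) = 0 := rfl
  set q : ℤ := (2 * (B : ℤ) - 1) * 2 ^ r + δ with hq
  set x : ℤ := (2 * (A : ℤ) - 1) * 2 ^ k + ε with hxdef
  set x₀ : ZMod (2 ^ w) := ((x : ℤ) : ZMod (2 ^ w)) with hx₀
  set f : ZMod (2 ^ w) → ZMod (2 ^ w) :=
    (fun y : ZMod (2 ^ w) => (Polynomial.Chebyshev.T (ZMod (2 ^ w)) q).eval y) with hf
  have hεodd : Odd ε := by rcases hε with h | h <;> rw [h] <;> decide
  have hδodd : Odd δ := by rcases hδ with h | h <;> rw [h] <;> decide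
  have hxodd : Odd x := by
    rw [hxdef]
    exact (Even.mul_left (aux_even_two_pow (by omega)) _).add_odd hεodd
  have hε2 : ε ^ 2 = 1 := by rcases hε with h | h <;> rw [h] <;> norm_num
  have hm₀odd : Odd ((2 * (A:ℤ) - 1) * ((2 * (A:ℤ) - 1) * 2 ^ (k - 1) + ε)) := by
    refine Odd.mul ⟨(A:ℤ) - 1, by ring⟩ ?_
    exact (Even.mul_left (aux_even_two_pow (by omega)) _).add_odd hεodd
  have h2k : (2:ℤ) ^ k = 2 * 2 ^ (k - 1) := by rw [← pow_succ']; congr 1; omega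
  have h2k1 : (2:ℤ) ^ (k + 1) = 2 * 2 ^ k := by rw [pow_succ]; ring
  have hx2 : x ^ 2 - 1 =
      2 ^ (k + 1) * ((2 * (A:ℤ) - 1) * ((2 * (A:ℤ) - 1) * 2 ^ (k - 1) + ε)) := by
    rw [hxdef, h2k1, h2k]
    linear_combination hε2
  have hb : Odd (2 * (B:ℤ) - 1) := ⟨(B:ℤ) - 1, by ring⟩
  -- iteration formula
  have hiter : ∀ n : ℕ, f^[n] x₀ = (((T ℤ (q ^ n)).eval x : ℤ) : ZMod (2 ^ w)) := by
    intro n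
    induction n with
    | zero => rw [pow_zero]; simp [T_one, hx₀]
    | succ n ih =>
      rw [Function.iterate_succ_apply', ih, hf]
      simp only
      rw [aux_evalT_cast (ZMod (2 ^ w)) (q ^ n) x, aux_evalT_cast (ZMod (2 ^ w)) (q ^ (n+1)) x,
        pow_succ', T_mul, Polynomial.eval_comp]
  -- the divisibility criterion
  have hcond : ∀ n : ℕ, n ≠ 0 → (f^[n] x₀ = x₀ ↔ 2 ^ (w - k - r - 1) ∣ n) := by
    intro n hn
    obtain ⟨t, c, hcodd, rfl⟩ := Nat.exists_eq_two_pow_mul_odd hn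
    obtain ⟨cc, hccodd, hcc⟩ := aux_ppow hδ hr hb hq t c hcodd
    have hη : δ ^ (2 ^ t * c) = 1 ∨ δ ^ (2 ^ t * c) = -1 := by
      rcases hδ with h | h
      · left; rw [h, one_pow]
      · rw [h]
        rcases Nat.even_or_odd (2 ^ t * c) with he | ho
        · left; exact he.neg_one_pow
        · right; exact ho.neg_one_pow
    have hη2 : (δ ^ (2 ^ t * c)) ^ 2 = 1 := by rcases hη with h | h <;> rw [h] <;> norm_num
    have hNeq : q ^ (2 ^ t * c) =
        δ ^ (2 ^ t * c) * (1 + (δ ^ (2 ^ t * c) * cc) * 2 ^ (r + t)) := by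
      rw [hcc]
      linear_combination -(cc * 2 ^ (r + t)) * hη2
    have hoddηcc : Odd (δ ^ (2 ^ t * c) * cc) := by
      rcases hη with h | h <;> rw [h] <;> simpa using hccodd
    obtain ⟨o, hoodd, hkey⟩ :=
      aux_key hxodd hm₀odd hx2 (show 2 ≤ r + t by omega) hoddηcc hη
    rw [← hNeq] at hkey
    rw [hiter (2 ^ t * c)]
    have hcast : ((2 ^ w : ℕ) : ℤ) = (2 : ℤ) ^ w := by push_cast; rfl
    have hzm : ((((T ℤ (q ^ (2 ^ t * c))).eval x : ℤ) : ZMod (2 ^ w)) = x₀) ↔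
        (2 : ℤ) ^ w ∣ ((T ℤ (q ^ (2 ^ t * c))).eval x - x) := by
      rw [hx₀, ← sub_eq_zero, ← Int.cast_sub, ZMod.intCast_zmod_eq_zero_iff_dvd, hcast]
    rw [hzm, hkey]
    have hdvd : ((2:ℤ) ^ w ∣ 2 ^ (k + (r + t) + 1) * o) ↔ w ≤ k + (r + t) + 1 := by
      constructor
      · intro h
        by_contra hlt
        push_neg at hlt
        have h1 : (2:ℤ) ^ (k + (r + t) + 1) * 2 ∣ 2 ^ (k + (r + t) + 1) * o := by
          refine dvd_trans ?_ h
          rw [← pow_succ]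
          exact pow_dvd_pow 2 (by omega)
        have h2d : (2:ℤ) ∣ o :=
          (mul_dvd_mul_iff_left (pow_ne_zero _ (two_ne_zero))).1 h1
        obtain ⟨j, hj⟩ := h2d
        exact (Int.not_odd_iff_even.2 ⟨j, by omega⟩) hoodd
      · intro h
        exact Dvd.dvd.mul_right (pow_dvd_pow 2 h) o
    rw [hdvd]
    constructor
    · intro h
      exact dvd_mul_of_dvd_left (pow_dvd_pow 2 (by omega)) c
    · intro h
      have hcop : Nat.Coprime (2 ^ (w - k - r - 1)) c :=
        Nat.Coprime.pow_left _ ((Nat.prime_two.coprime_iff_not_dvd).2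
          (by rw [Nat.odd_iff] at hcodd; omega))
      have h1 := Nat.Coprime.dvd_of_dvd_mul_right hcop h
      have h2' := (Nat.pow_dvd_pow_iff_le_right (by norm_num : 1 < 2)).1 h1
      omega
  -- conclude
  have hmax : max (2 ^ (w - k - r - 1)) 1 = 2 ^ (w - k - r - 1) :=
    max_eq_left Nat.one_le_two_pow
  rw [hmax]
  have hMpos : 0 < 2 ^ (w - k - r - 1) := Nat.pow_pos (by norm_num)
  have hMper : Function.IsPeriodicPt f (2 ^ (w - k - r - 1)) x₀ :=
    (hcond _ (by omega)).2 dvd_rfl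
  have hPdvd : Function.minimalPeriod f x₀ ∣ 2 ^ (w - k - r - 1) :=
    hMper.minimalPeriod_dvd
  have hPpos : 0 < Function.minimalPeriod f x₀ := hMper.minimalPeriod_pos hMpos
  have hPper := Function.isPeriodicPt_minimalPeriod f x₀
  have hMdvdP := (hcond _ (by omega)).1 hPper
  exact Nat.dvd_antisymm hPdvd hMdvdP
end

section
/- Let X₂ = (2A−1)·2^{k} with A, k natural numbers, 1 ≤ k ≤ w−1, and let p = (2B−1)·2^r ± 1 with B a natural number and 2 ≤ r ≤ w−1. Then the orbit of X₂ under iteration of the map x ↦ T_p(x) modulo 2^w has period exactly max(2^{w−k−r}, 1). -/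
/-!
Put `m = p ^ n` and `ε = δ ^ n`, so that `m = 4 j + ε`. The product formula
`2 (X² - 1) U_{a-1} U_{b-1} = T_{a+b} - T_{a-b}` with `a = 2 j`, `b = 2 j + ε` writes
`T_m(x) - x` as `2 (x² - 1) U_{2j-1}(x)` times an even-index `U`, which is odd. For even `x`,
`x² - 1` is odd too, and the doubling formula `U_{2j-1} = 2 U_{j-1} T_j` gives
`v₂(U_{2j-1}(x)) = v₂(x) + 1 + v₂(j)`. Hence `v₂(T_m(x) - x) = v₂(x) + v₂(m - ε)`, and lifting the
exponent turns `v₂(p ^ n - δ ^ n)` into `r + v₂(n)`. So `X₂` is `n`-periodic modulo `2 ^ w` exactly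
when `w ≤ k + r + v₂(n)`, i.e. when `2 ^ (w - k - r) ∣ n`.
-/

open Polynomial Polynomial.Chebyshev

namespace Polynomial.Chebyshev

variable (R : Type*) [CommRing R]

theorem U_mul_T (m k : ℤ) : 2 * U R m * T R k = U R (m + k) + U R (m - k) := by
  induction k using Polynomial.Chebyshev.induct with
  | zero => simp [two_mul]
  | one => linear_combination (norm := ring_nf) -U_add_one R m + 2 * U R m * T_one R
  | add_two k ih1 ih2 =>
    linear_combination (norm := ring_nf) 2 * U R m * T_add_two R k - U_sub_two R (m - k)
      - U_add_two R (m + k) - ih2 + 2 * (X : R[X]) * ih1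
  | neg_add_one k ih1 ih2 =>
    linear_combination (norm := ring_nf) 2 * U R m * T_add_two R (-k - 1)
      - U_sub_two R (m - (-k - 1)) - U_add_two R (m + (-k - 1)) - ih2 + 2 * (X : R[X]) * ih1

theorem two_mul_X_sq_sub_one_mul_U_mul_U (a b : ℤ) :
    2 * (X ^ 2 - 1) * U R (a - 1) * U R (b - 1) = T R (a + b) - T R (a - b) := by
  linear_combination (norm := ring_nf)
    -2 * U R (a - 1) * one_sub_X_sq_mul_U_eq_pol_in_T R (b - 1) + U_mul_T R (a - 1) (b + 1)
      - X * U_mul_T R (a - 1) b - T_eq_U_sub_X_mul_U R (a + b) + T_eq_U_sub_X_mul_U R (a - b)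
      + U_eq R (a - b)

theorem T_two_mul (n : ℤ) : T R (2 * n) = 2 * T R n ^ 2 - 1 := by
  linear_combination (norm := ring_nf) -T_mul_T R n n - T_zero R

theorem U_two_mul (n : ℤ) : U R (2 * n) = 2 * U R n * T R n - 1 := by
  linear_combination (norm := ring_nf) -U_mul_T R n n - U_zero R

theorem U_two_mul_sub_one (n : ℤ) : U R (2 * n - 1) = 2 * U R (n - 1) * T R n := by
  linear_combination (norm := ring_nf) -U_mul_T R (n - 1) n - U_neg_one R

theorem T_two_mul_add_one (n : ℤ) : T R (2 * n + 1) = X * U R (2 * n) - U R (2 * n - 1) := by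
  linear_combination (norm := ring_nf) T_eq_X_mul_U_sub_U R (2 * n - 1)

theorem iterate_eval_T (m : ℤ) (n : ℕ) :
    (fun y => (T R m).eval y)^[n] = fun y => (T R (m ^ n)).eval y := by
  induction n with
  | zero => funext y; simp
  | succ n ih => funext y; rw [Function.iterate_succ_apply', ih, pow_succ', T_mul, eval_comp]

theorem eval_T_intCast (m x : ℤ) : (T R m).eval (x : R) = (((T ℤ m).eval x : ℤ) : R) := by
  rw [← map_T (Int.castRingHom R), eval_intCast_map, Int.cast_id, eq_intCast]

end Polynomial.Chebyshev

theorem Function.minimalPeriod_eq_of_isPeriodicPt_iff {α : Type*} {f : α → α} {x : α} {m : ℕ}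
    (h : ∀ n, IsPeriodicPt f n x ↔ m ∣ n) : minimalPeriod f x = m :=
  Nat.dvd_antisymm ((h m).2 dvd_rfl).minimalPeriod_dvd ((h _).1 (isPeriodicPt_minimalPeriod f x))

theorem isPeriodicPt_eval_T_intCast_iff (N : ℕ) (m x : ℤ) (n : ℕ) :
    Function.IsPeriodicPt (fun y : ZMod N => (T (ZMod N) m).eval y) n (x : ZMod N) ↔
      (N : ℤ) ∣ (T ℤ (m ^ n)).eval x - x := by
  simp only [Function.IsPeriodicPt, Function.IsFixedPt, iterate_eval_T]
  rw [eval_T_intCast, ZMod.intCast_eq_intCast_iff_dvd_sub, dvd_sub_comm]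

namespace Int

theorem emultiplicity_two_eq_zero_of_odd {a : ℤ} (ha : Odd a) : emultiplicity 2 a = 0 :=
  emultiplicity_eq_zero.mpr (by rwa [← even_iff_two_dvd, Int.not_even_iff_odd])

theorem emultiplicity_two_two : emultiplicity (2 : ℤ) 2 = 1 := by
  simpa using emultiplicity_pow_self_of_prime Int.prime_two 1

theorem emultiplicity_two_two_mul (a : ℤ) : emultiplicity 2 (2 * a) = 1 + emultiplicity 2 a := by
  rw [emultiplicity_mul Int.prime_two, emultiplicity_two_two]

theorem emultiplicity_two_odd_mul_two_pow {a : ℤ} (ha : Odd a) (e : ℕ) :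
    emultiplicity 2 (a * 2 ^ e) = e := by
  rw [emultiplicity_mul Int.prime_two, emultiplicity_two_eq_zero_of_odd ha,
    emultiplicity_pow_self_of_prime Int.prime_two, zero_add]

end Int

theorem odd_eval_T_two_mul (x n : ℤ) : Odd ((T ℤ (2 * n)).eval x) := by
  rw [T_two_mul]
  exact ⟨(T ℤ n).eval x ^ 2 - 1, by
    simp only [eval_sub, eval_mul, eval_pow, eval_ofNat, eval_one]; ring⟩

theorem odd_eval_U_two_mul (x n : ℤ) : Odd ((U ℤ (2 * n)).eval x) := by
  rw [U_two_mul]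
  exact ⟨(U ℤ n).eval x * (T ℤ n).eval x - 1, by
    simp only [eval_sub, eval_mul, eval_ofNat, eval_one]; ring⟩

theorem emultiplicity_two_eval_U_two_mul_sub_one_natCast (x : ℤ) (j : ℕ) :
    emultiplicity 2 ((U ℤ (2 * j - 1)).eval x) =
      emultiplicity 2 x + 1 + emultiplicity 2 (j : ℤ) := by
  induction j using Nat.evenOddRec with
  | h0 => simp
  | h_even i ih =>
    push_cast
    rw [U_two_mul_sub_one, eval_mul, eval_mul, eval_ofNat, emultiplicity_mul Int.prime_two,
      Int.emultiplicity_two_two_mul, ih,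
      Int.emultiplicity_two_eq_zero_of_odd (odd_eval_T_two_mul _ _), Int.emultiplicity_two_two_mul]
    ring
  | h_odd i ih =>
    have hT : emultiplicity 2 ((T ℤ (2 * i + 1)).eval x) = emultiplicity 2 x := by
      rcases eq_or_ne x 0 with rfl | hx0
      · rw [T_eval_zero_of_odd ℤ (by simp)]
      have hfin : emultiplicity 2 x ≠ ⊤ := finiteMultiplicity_iff_emultiplicity_ne_top.mp
        (Int.finiteMultiplicity_iff.mpr ⟨by simp, hx0⟩)
      have hxU : emultiplicity 2 (x * (U ℤ (2 * i)).eval x) = emultiplicity 2 x := by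
        rw [emultiplicity_mul Int.prime_two,
          Int.emultiplicity_two_eq_zero_of_odd (odd_eval_U_two_mul _ _), add_zero]
      have hlt : emultiplicity 2 (x * (U ℤ (2 * i)).eval x) <
          emultiplicity 2 ((U ℤ (2 * i - 1)).eval x) := by
        rw [hxU, ih, add_right_comm, ENat.lt_add_one_iff' hfin]
        exact le_self_add
      rw [T_two_mul_add_one, eval_sub, eval_mul, eval_X, ← neg_sub, emultiplicity_neg,
        emultiplicity_sub_of_gt hlt, hxU]
    push_cast
    rw [U_two_mul_sub_one, add_sub_cancel_right, eval_mul, eval_mul, eval_ofNat,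
      emultiplicity_mul Int.prime_two, Int.emultiplicity_two_two_mul, hT,
      Int.emultiplicity_two_eq_zero_of_odd (odd_eval_U_two_mul _ _),
      Int.emultiplicity_two_eq_zero_of_odd (by simp : Odd (2 * (i : ℤ) + 1))]
    ring

theorem emultiplicity_two_eval_U_two_mul_sub_one (x j : ℤ) :
    emultiplicity 2 ((U ℤ (2 * j - 1)).eval x) = emultiplicity 2 x + 1 + emultiplicity 2 j := by
  obtain ⟨n, rfl | rfl⟩ := Int.eq_nat_or_neg j
  · exact emultiplicity_two_eval_U_two_mul_sub_one_natCast x n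
  · rw [mul_neg, U_neg_sub_one, eval_neg, emultiplicity_neg, emultiplicity_neg]
    exact emultiplicity_two_eval_U_two_mul_sub_one_natCast x n

theorem emultiplicity_two_eval_T_sub_self {x : ℤ} (hx : Even x) {m ε : ℤ} (hε : ε = 1 ∨ ε = -1)
    (hm : 4 ∣ m - ε) :
    emultiplicity 2 ((T ℤ m).eval x - x) = emultiplicity 2 x + emultiplicity 2 (m - ε) := by
  obtain ⟨j, hj⟩ := hm
  have hval : ∀ i : ℤ, emultiplicity 2 (2 * (x ^ 2 - 1) * (U ℤ (2 * j - 1)).eval x *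
      (U ℤ (2 * i)).eval x) = emultiplicity 2 x + emultiplicity 2 (4 * j) := by
    intro i
    have hx2 : Odd (x ^ 2 - 1) := (hx.pow_of_ne_zero two_ne_zero).sub_odd odd_one
    rw [emultiplicity_mul Int.prime_two, emultiplicity_mul Int.prime_two,
      emultiplicity_mul Int.prime_two, Int.emultiplicity_two_eq_zero_of_odd hx2,
      Int.emultiplicity_two_eq_zero_of_odd (odd_eval_U_two_mul _ _),
      emultiplicity_two_eval_U_two_mul_sub_one, show (4 : ℤ) * j = 2 * (2 * j) by ring,
      Int.emultiplicity_two_two_mul, Int.emultiplicity_two_two_mul, Int.emultiplicity_two_two]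
    ring
  rw [hj]
  rcases hε with rfl | rfl
  · obtain rfl : m = 4 * j + 1 := by linarith
    have h : T ℤ (4 * j + 1) - X = 2 * (X ^ 2 - 1) * U ℤ (2 * j - 1) * U ℤ (2 * j) := by
      linear_combination (norm := ring_nf)
        -two_mul_X_sq_sub_one_mul_U_mul_U ℤ (2 * j) (2 * j + 1) + T_neg_one ℤ
    rw [← hval j, show (T ℤ _).eval x - x = _ by simpa using congrArg (eval x) h]
  · obtain rfl : m = 4 * j - 1 := by linarith
    have h : T ℤ (4 * j - 1) - X = 2 * (X ^ 2 - 1) * U ℤ (2 * j - 1) * U ℤ (2 * (j - 1)) := by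
      linear_combination (norm := ring_nf)
        -two_mul_X_sq_sub_one_mul_U_mul_U ℤ (2 * j) (2 * j - 1) + T_one ℤ
    rw [← hval (j - 1), show (T ℤ _).eval x - x = _ by simpa using congrArg (eval x) h]

theorem emultiplicity_two_eval_T_pow_sub_self {x : ℤ} (hx : Even x) {q δ : ℤ}
    (hδ : δ = 1 ∨ δ = -1) (hq : 4 ∣ q - δ) (n : ℕ) :
    emultiplicity 2 ((T ℤ (q ^ n)).eval x - x) =
      emultiplicity 2 x + emultiplicity 2 (q - δ) + emultiplicity 2 (n : ℤ) := by
  have hq2 : ¬2 ∣ q := by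
    obtain ⟨t, ht⟩ := hq
    rintro ⟨s, rfl⟩
    rcases hδ with rfl | rfl <;> omega
  have hδn : δ ^ n = 1 ∨ δ ^ n = -1 := by
    rcases hδ with rfl | rfl
    · simp
    · exact neg_one_pow_eq_or ℤ n
  rw [emultiplicity_two_eval_T_sub_self hx hδn (hq.trans (sub_dvd_pow_sub_pow q δ n)),
    Int.two_pow_sub_pow' n hq hq2, add_assoc]

theorem chebyshev_orbital_period_X2_general (w A B k r : ℕ)
    (hk : 1 ≤ k) (hr : 2 ≤ r)
    (δ : ℤ) (hδ : δ = 1 ∨ δ = -1) :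
    Function.minimalPeriod
        (fun x : ZMod (2 ^ w) =>
          (Polynomial.Chebyshev.T (ZMod (2 ^ w)) ((2 * (B : ℤ) - 1) * 2 ^ r + δ)).eval x)
        (((2 * (A : ℤ) - 1) * 2 ^ k : ℤ) : ZMod (2 ^ w)) =
      max (2 ^ (w - k - r)) 1 := by
  have hAodd : Odd (2 * (A : ℤ) - 1) := ⟨A - 1, by ring⟩
  have hBodd : Odd (2 * (B : ℤ) - 1) := ⟨B - 1, by ring⟩
  have hx : Even ((2 * (A : ℤ) - 1) * 2 ^ k) := (even_two.pow_of_ne_zero (by omega)).mul_left _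
  have h4 : (4 : ℤ) ∣ (2 * (B : ℤ) - 1) * 2 ^ r + δ - δ := by
    rw [add_sub_cancel_right]
    exact (pow_dvd_pow 2 hr).mul_left _
  rw [max_eq_left Nat.one_le_two_pow]
  refine Function.minimalPeriod_eq_of_isPeriodicPt_iff fun n => ?_
  rw [isPeriodicPt_eval_T_intCast_iff, Nat.cast_pow, Nat.cast_ofNat, pow_dvd_iff_le_emultiplicity,
    emultiplicity_two_eval_T_pow_sub_self hx hδ h4, add_sub_cancel_right,
    Int.emultiplicity_two_odd_mul_two_pow hAodd, Int.emultiplicity_two_odd_mul_two_pow hBodd]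
  rw [← Int.natCast_dvd_natCast, Nat.cast_pow, Nat.cast_ofNat, pow_dvd_iff_le_emultiplicity,
    ENat.natCast_sub, ENat.natCast_sub, tsub_le_iff_left, tsub_le_iff_left, add_assoc]

/-- Let `X₂ = (2A−1)·2^k` with `A ≥ 1`, `1 ≤ k ≤ w−1`, and let
`p = (2B−1)·2^r ± 1` with `B ≥ 1`, `2 ≤ r ≤ w−1`. Then the orbit of `X₂` under
`x ↦ T_p(x)` on `ℤ/2^wℤ` has period exactly `max (2^{w−k−r}) 1`. -/
theorem chebyshev_orbital_period_X2 (w A B k r : ℕ) (hA : 1 ≤ A) (hB : 1 ≤ B)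
    (hk : 1 ≤ k) (hkw : k ≤ w - 1) (hr : 2 ≤ r) (hrw : r ≤ w - 1) (hw : 1 ≤ w)
    (δ : ℤ) (hδ : δ = 1 ∨ δ = -1) :
    Function.minimalPeriod
        (fun x : ZMod (2 ^ w) =>
          (Polynomial.Chebyshev.T (ZMod (2 ^ w)) ((2 * (B : ℤ) - 1) * 2 ^ r + δ)).eval x)
        (((2 * (A : ℤ) - 1) * 2 ^ k : ℤ) : ZMod (2 ^ w)) =
      max (2 ^ (w - k - r)) 1 :=
  chebyshev_orbital_period_X2_general w A B k r hk hr δ hδ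
end
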